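/- Let T be a monad on a category W. Then 𝒢(T) is a monad on 𝒢(W), acting as the identity on vertex sets and as T on hom-objects, and the Eilenberg–Moore category of 𝒢(T) is isomorphic to 𝒢(W^T), the category of graphs enriched in the Eilenberg–Moore category W^T of T; that is, a 𝒢(T)-algebra structure on a W-graph is precisely a T-algebra structure on each of its hom-objects. -/

import Mathlib

open CategoryTheory CategoryTheory.Limits CategoryTheory.MonoidalCategory

universe v u v₂ u₂

/-- A `W`-graph: a set of vertices together with a `W`-object of edges
between any two vertices. -/
structure WGraph (W : Type u) [Category.{v} W] : Type (max u 1) where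
  V : Type
  hom : V → V → W

namespace WGraph

variable {W : Type u} [Category.{v} W]

/-- A morphism of `W`-graphs. -/
structure Hom (A B : WGraph W) where
  f0 : A.V → B.V
  f : ∀ x y : A.V, A.hom x y ⟶ B.hom (f0 x) (f0 y)

theorem Hom.ext' {A B : WGraph W} {F G : Hom A B} (h0 : F.f0 = G.f0)
    (h : ∀ x y, HEq (F.f x y) (G.f x y)) : F = G := by
  cases F with
  | mk F0 Ff =>
    cases G with
    | mk G0 Gf =>
      cases h0
      simp only [Hom.mk.injEq, heq_eq_eq, true_and]
      funext x y
      exact eq_of_heq (h x y)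

instance : Category (WGraph W) where
  Hom := Hom
  id A := ⟨_root_.id, fun _ _ => 𝟙 _⟩
  comp F G := ⟨G.f0 ∘ F.f0, fun x y => F.f x y ≫ G.f _ _⟩
  id_comp F := Hom.ext' rfl (fun x y => heq_of_eq (by simp))
  comp_id F := Hom.ext' rfl (fun x y => heq_of_eq (by simp))
  assoc F G H := Hom.ext' rfl (fun x y => heq_of_eq (by simp))

@[simp] theorem id_f0 (A : WGraph W) : Hom.f0 (𝟙 A) = _root_.id := rfl
@[simp] theorem comp_f0 {A B C : WGraph W} (F : A ⟶ B) (G : B ⟶ C) :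
    (F ≫ G).f0 = G.f0 ∘ F.f0 := rfl
@[simp] theorem id_f (A : WGraph W) (x y : A.V) : Hom.f (𝟙 A) x y = 𝟙 (A.hom x y) := rfl
@[simp] theorem comp_f {A B C : WGraph W} (F : A ⟶ B) (G : B ⟶ C) (x y : A.V) :
    (F ≫ G).f x y = F.f x y ≫ G.f (F.f0 x) (F.f0 y) := rfl

end WGraph

/-- A small `W`-enriched category, bundled. -/
structure WCat (W : Type u) [Category.{v} W] [MonoidalCategory W] : Type (max u v 1) where
  α : Type
  [str : EnrichedCategory W α]

namespace WCat

variable {W : Type u} [Category.{v} W] [MonoidalCategory W]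

attribute [instance] WCat.str

theorem efunctor_ext {C D : Type} [EnrichedCategory W C] [EnrichedCategory W D]
    {F G : EnrichedFunctor W C D} (h0 : F.obj = G.obj)
    (h : ∀ x y, HEq (F.map x y) (G.map x y)) : F = G := by
  cases F with
  | mk F0 Ff _ _ =>
    cases G with
    | mk G0 Gf _ _ =>
      cases h0
      simp only [EnrichedFunctor.mk.injEq, heq_eq_eq, true_and]
      funext x y
      exact eq_of_heq (h x y)

instance : Category (WCat W) where
  Hom A B := EnrichedFunctor W A.α B.α
  id A := EnrichedFunctor.id W A.α
  comp F G := F.comp W G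
  id_comp F := efunctor_ext rfl (fun x y => heq_of_eq (by exact Category.id_comp _))
  comp_id F := efunctor_ext rfl (fun x y => heq_of_eq (by exact Category.comp_id _))
  assoc F G H := efunctor_ext rfl (fun x y => heq_of_eq (by exact Category.assoc _ _ _))

end WCat

/-- The forgetful functor from small `W`-categories to `W`-graphs. -/
def forgetW (W : Type u) [Category.{v} W] [MonoidalCategory W] :
    WCat W ⥤ WGraph W where
  obj A := ⟨A.α, fun x y => x ⟶[W] y⟩
  map F := ⟨F.obj, F.map⟩
  map_id A := rfl
  map_comp F G := rfl

/-- A monoidal category is `⊗`-distributive if it has small coproducts and these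
are preserved by tensoring on either side. -/
class TensorDistributive (W : Type u) [Category.{v} W] [MonoidalCategory W] : Prop where
  hasCoproducts : HasCoproducts.{0} W
  preservesLeft : ∀ (X : W) (J : Type),
    PreservesColimitsOfShape (Discrete J) (tensorLeft X)
  preservesRight : ∀ (X : W) (J : Type),
    PreservesColimitsOfShape (Discrete J) (tensorRight X)

attribute [instance] TensorDistributive.hasCoproducts

/-- A chain from `x` to `y` in a `W`-graph `A`: a sequence
`x = z 0, z 1, …, z n = y` of vertices. -/
structure WGraph.Chain {W : Type u} [Category.{v} W] (A : WGraph W) (x y : A.V) where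
  n : ℕ
  z : Fin (n + 1) → A.V
  hx : z 0 = x
  hy : z (Fin.last n) = y

/-- The tensor product `A(z_{n-1}, z_n) ⊗ ⋯ ⊗ A(z_0, z_1)` of the hom-objects along a
chain of vertices; for `n = 0` it is the unit object of `W`. -/
def WGraph.chainTensor {W : Type u} [Category.{v} W] [MonoidalCategory W] (A : WGraph W) :
    ∀ n : ℕ, (Fin (n + 1) → A.V) → W
  | 0, _ => 𝟙_ W
  | n + 1, z =>
      A.hom (z (Fin.castSucc (Fin.last n))) (z (Fin.last (n + 1)))
        ⊗ WGraph.chainTensor A n (fun i => z i.castSucc)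
section GFunctor

variable {W : Type u} [Category.{v} W] {W' : Type u₂} [Category.{v₂} W']

/-- The functor `𝒢(F) : 𝒢(W) ⥤ 𝒢(W')` induced by `F : W ⥤ W'`: it is the identity on
vertex sets and applies `F` on hom-objects. -/
def Gmap (F : W ⥤ W') : WGraph W ⥤ WGraph W' where
  obj A := ⟨A.V, fun x y => F.obj (A.hom x y)⟩
  map f := ⟨f.f0, fun x y => F.map (f.f x y)⟩
  map_id A := WGraph.Hom.ext' rfl (fun x y => heq_of_eq (by simp))
  map_comp f g := WGraph.Hom.ext' rfl (fun x y => heq_of_eq (by simp))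

@[simp] theorem Gmap_obj_V (F : W ⥤ W') (A : WGraph W) : ((Gmap F).obj A).V = A.V := rfl
@[simp] theorem Gmap_obj_hom (F : W ⥤ W') (A : WGraph W) (x y : A.V) :
    ((Gmap F).obj A).hom x y = F.obj (A.hom x y) := rfl
@[simp] theorem Gmap_map_f0 (F : W ⥤ W') {A B : WGraph W} (f : A ⟶ B) :
    ((Gmap F).map f).f0 = f.f0 := rfl
@[simp] theorem Gmap_map_f (F : W ⥤ W') {A B : WGraph W} (f : A ⟶ B) (x y : A.V) :
    ((Gmap F).map f).f x y = F.map (f.f x y) := rfl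

/-- The natural transformation `𝒢(α) : 𝒢(F) ⟶ 𝒢(G)` induced by `α : F ⟶ G`. -/
def Gnat {F G : W ⥤ W'} (α : F ⟶ G) : Gmap F ⟶ Gmap G where
  app A := ⟨_root_.id, fun x y => α.app (A.hom x y)⟩
  naturality A B f := WGraph.Hom.ext' rfl (fun x y => heq_of_eq (by exact α.naturality (f.f x y)))

@[simp] theorem Gnat_app_f0 {F G : W ⥤ W'} (α : F ⟶ G) (A : WGraph W) :
    ((Gnat α).app A).f0 = _root_.id := rfl
@[simp] theorem Gnat_app_f {F G : W ⥤ W'} (α : F ⟶ G) (A : WGraph W) (x y : A.V) :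
    ((Gnat α).app A).f x y = α.app (A.hom x y) := rfl

end GFunctor

section GMonad

variable {W : Type u} [Category.{v} W]

/-- The monad `𝒢(T)` on `𝒢(W)` induced by a monad `T` on `W`: the identity on vertex
sets, acting as `T` on hom-objects. -/
def Gmonad (T : Monad W) : Monad (WGraph W) where
  toFunctor := Gmap T.toFunctor
  η := Gnat T.η
  μ := Gnat T.μ
  assoc A := WGraph.Hom.ext' rfl
    (fun x y => heq_of_eq (by exact T.assoc (A.hom x y)))
  left_unit A := WGraph.Hom.ext' rfl
    (fun x y => heq_of_eq (by exact T.left_unit (A.hom x y)))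
  right_unit A := WGraph.Hom.ext' rfl
    (fun x y => heq_of_eq (by exact T.right_unit (A.hom x y)))

@[simp] theorem Gmonad_obj_V (T : Monad W) (A : WGraph W) :
    (((Gmonad T).toFunctor).obj A).V = A.V := rfl

end GMonad

namespace Stmt7Aux

variable {W : Type u} [Category.{v} W] {T : Monad W}

theorem a_f0 (A : Monad.Algebra (Gmonad T)) : A.a.f0 = _root_.id := by
  have h := congrArg WGraph.Hom.f0 A.unit
  exact h

theorem hom_eq (A : Monad.Algebra (Gmonad T)) (x y : A.A.V) :
    A.A.hom (A.a.f0 x) (A.a.f0 y) = A.A.hom x y := by rw [a_f0]; rfl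

theorem cast_hom {X Y Y' : W} (h : Y = Y') (e : (X ⟶ Y) = (X ⟶ Y')) (f : X ⟶ Y) :
    cast e f = f ≫ eqToHom h := by subst h; simp

/-- The `T`-algebra action on each hom-object, coming from a `𝒢(T)`-algebra. -/
def act (A : Monad.Algebra (Gmonad T)) (x y : A.A.V) :
    T.obj (A.A.hom x y) ⟶ A.A.hom x y :=
  cast (by rw [a_f0]; rfl) (A.a.f x y)

theorem act_eq (A : Monad.Algebra (Gmonad T)) (x y : A.A.V) :
    act A x y = A.a.f x y ≫ eqToHom (hom_eq A x y) :=
  cast_hom _ _ _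

theorem congr_f {A B : WGraph W} {F G : A ⟶ B} (h : F = G) (x y : A.V) :
    F.f x y = G.f x y ≫ eqToHom (by rw [h]) := by subst h; simp

theorem f_idx {A B : WGraph W} (F : A ⟶ B) {x x' y y' : A.V} (hx : x' = x) (hy : y' = y) :
    F.f x y = eqToHom (by rw [hx, hy]) ≫ F.f x' y' ≫ eqToHom (by rw [hx, hy]) := by
  subst hx; subst hy; simp

theorem act_unit (A : Monad.Algebra (Gmonad T)) (x y : A.A.V) :
    T.η.app (A.A.hom x y) ≫ act A x y = 𝟙 (A.A.hom x y) := by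
  have h := congr_f A.unit x y
  simp only [Gmonad, WGraph.comp_f, Gnat_app_f, Gnat_app_f0, WGraph.id_f, Category.id_comp, id_eq] at h
  rw [act_eq]
  erw [← Category.assoc, h, Category.id_comp]
  exact (eqToHom_trans (C := W) _ _).trans (eqToHom_refl (C := W) _ _)

theorem act_assoc (A : Monad.Algebra (Gmonad T)) (x y : A.A.V) :
    T.μ.app (A.A.hom x y) ≫ act A x y = T.map (act A x y) ≫ act A x y := by
  have h := congr_f A.assoc x y
  have hidx := f_idx A.a (congrFun (a_f0 A) x).symm (congrFun (a_f0 A) y).symm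
  erw [WGraph.comp_f, WGraph.comp_f] at h
  simp only [Gmonad, WGraph.comp_f, Gmap_map_f, Gnat_app_f, Gmap_map_f0, Gnat_app_f0, id_eq] at h
  rw [hidx] at h
  erw [Gmap_map_f] at h
  simp only [act_eq, eqToHom_map, Functor.map_comp]
  erw [← Category.assoc, h]
  erw [Category.assoc, Category.assoc, Category.assoc, Category.assoc, eqToHom_trans, eqToHom_trans]
  erw [Functor.map_comp, eqToHom_map]
  exact (Category.assoc _ _ _).symm

/-- `T`-algebra on each hom-object. -/
def algAt (A : Monad.Algebra (Gmonad T)) (x y : A.A.V) : Monad.Algebra T where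
  A := A.A.hom x y
  a := act A x y
  unit := act_unit A x y
  assoc := act_assoc A x y

theorem map_comm {A B : Monad.Algebra (Gmonad T)} (u : A ⟶ B) (x y : A.A.V) :
    T.map (u.f.f x y) ≫ act B (u.f.f0 x) (u.f.f0 y) = act A x y ≫ u.f.f x y := by
  have h := congr_f u.h x y
  erw [WGraph.comp_f, WGraph.comp_f] at h
  simp only [Gmonad, WGraph.comp_f, Gmap_map_f, Gnat_app_f, Gmap_map_f0, Gnat_app_f0, id_eq] at h
  have hidx := f_idx u.f (congrFun (a_f0 A) x).symm (congrFun (a_f0 A) y).symm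
  rw [hidx] at h
  simp only [act_eq]
  erw [← Category.assoc, h]
  erw [Category.assoc, Category.assoc, Category.assoc, Category.assoc, eqToHom_trans, eqToHom_trans, eqToHom_refl, Category.comp_id]
  exact (Category.assoc _ _ _).symm

/-- The comparison functor `(𝒢(W))^{𝒢(T)} ⥤ 𝒢(W^T)`. -/
def Ffun (T : Monad W) : Monad.Algebra (Gmonad T) ⥤ WGraph (Monad.Algebra T) where
  obj A := ⟨A.A.V, fun x y => algAt A x y⟩
  map u := ⟨u.f.f0, fun x y => ⟨u.f.f x y, map_comm u x y⟩⟩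
  map_id A := rfl
  map_comp u v := rfl

/-- The comparison functor `𝒢(W^T) ⥤ (𝒢(W))^{𝒢(T)}`. -/
def Gfun (T : Monad W) : WGraph (Monad.Algebra T) ⥤ Monad.Algebra (Gmonad T) where
  obj B :=
    { A := ⟨B.V, fun x y => (B.hom x y).A⟩
      a := ⟨_root_.id, fun x y => (B.hom x y).a⟩
      unit := WGraph.Hom.ext' rfl (fun x y => heq_of_eq ((B.hom x y).unit))
      assoc := WGraph.Hom.ext' rfl (fun x y => heq_of_eq ((B.hom x y).assoc)) }
  map g :=
    { f := ⟨g.f0, fun x y => (g.f x y).f⟩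
      h := WGraph.Hom.ext' rfl (fun x y => heq_of_eq (g.f x y).h) }
  map_id B := rfl
  map_comp u v := rfl

theorem alg_ext {X Y : Monad.Algebra (Gmonad T)} (h : X.A = Y.A)
    (ha : HEq X.a Y.a) : X = Y := by
  cases X; cases Y
  cases h
  cases ha
  rfl

theorem algHom_hext {X X' Y Y' : Monad.Algebra (Gmonad T)} (hX : X = X') (hY : Y = Y')
    {u : X ⟶ Y} {u' : X' ⟶ Y'} (h : HEq u.f u'.f) : HEq u u' := by
  subst hX; subst hY
  exact heq_of_eq (Monad.Algebra.Hom.ext (eq_of_heq h))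

theorem FG_obj (T : Monad W) (A : Monad.Algebra (Gmonad T)) :
    (Gfun T).obj ((Ffun T).obj A) = A :=
  alg_ext rfl (heq_of_eq (WGraph.Hom.ext' (a_f0 A).symm (fun x y => cast_heq _ _)))

theorem FG (T : Monad W) : Ffun T ⋙ Gfun T = 𝟭 _ := by
  apply Functor.hext
  · exact FG_obj T
  · intro A B u
    exact algHom_hext (FG_obj T A) (FG_obj T B) HEq.rfl

theorem GF (T : Monad W) : Gfun T ⋙ Ffun T = 𝟭 _ := rfl

theorem Fforget (T : Monad W) : Ffun T ⋙ Gmap (Monad.forget T) = Monad.forget (Gmonad T) := rfl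

end Stmt7Aux

/-- For a monad `T` on a category `W`, `𝒢(T)` is a monad on `𝒢(W)` acting
as the identity on vertex sets and as `T` on hom-objects, and its Eilenberg–Moore category
is isomorphic to the category `𝒢(W^T)` of graphs enriched in `T`-algebras, compatibly with
the forgetful functors; i.e. a `𝒢(T)`-algebra structure on a `W`-graph is precisely a
`T`-algebra structure on each hom-object. -/
theorem stmt7 (W : Type u) [Category.{v} W] (T : Monad W) :
    (∀ A : WGraph W, ((Gmonad T).toFunctor.obj A).V = A.V ∧
      ∀ x y : A.V, ((Gmonad T).toFunctor.obj A).hom x y = T.toFunctor.obj (A.hom x y)) ∧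
    ∃ (F : Monad.Algebra (Gmonad T) ⥤ WGraph (Monad.Algebra T))
      (G : WGraph (Monad.Algebra T) ⥤ Monad.Algebra (Gmonad T)),
        F ⋙ G = 𝟭 _ ∧ G ⋙ F = 𝟭 _ ∧
        F ⋙ Gmap (Monad.forget T) = Monad.forget (Gmonad T) := by
  refine ⟨fun A => ⟨rfl, fun x y => rfl⟩, Stmt7Aux.Ffun T, Stmt7Aux.Gfun T,
    Stmt7Aux.FG T, Stmt7Aux.GF T, Stmt7Aux.Fforget T⟩
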